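/- Let f_t be the N(0,t) density, 0 < c < K < 1, a(t) = K²t, and h_t(y) = (1/(1−c))(f_t(y) − c f_{a(t)}(y)). Let H̃_t have density h_t. Then for every x ∈ ℝ and every t > 0, ∂/∂t E[(H̃_t − x)^+] = (1/(2(1−c)))(f_t(x) − cK² f_{K²t}(x)) > 0; in particular the family (h_t)_{t>0} is increasing in convex order. -/

import Mathlib

/-!
Substituting `y = √t u` turns the Gaussian call function into Bachelier's closed form
`E[(B_t - x)⁺] = √t φ(x/√t) - x Φ̄(x/√t)`, with `φ` the standard normal density and `Φ̄` its tail;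
differentiating it in `t` gives `f_t(x)/2`. The density `h_t` is an affine combination of `f_t` and
`f_{K²t}`, so its call function has derivative `(f_t(x) - cK² f_{K²t}(x)) / (2(1 - c))`, which is
positive because `f_t(x) ≥ K f_{K²t}(x) > cK² f_{K²t}(x)`. A positive derivative on `(0, ∞)` makes
the call functions monotone.
-/

open Real MeasureTheory

/-- The centered Gaussian density with variance `t`. -/
noncomputable def gaussDensity (t y : ℝ) : ℝ :=
  Real.exp (-(y ^ 2) / (2 * t)) / Real.sqrt (2 * Real.pi * t)

/-- The mixture-complement density `h_t` for the fake Brownian motion. -/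
noncomputable def fakeDensity (c K t y : ℝ) : ℝ :=
  (1 / (1 - c)) * (gaussDensity t y - c * gaussDensity (K ^ 2 * t) y)

open Filter Set

lemma continuous_gaussDensity (t : ℝ) : Continuous (gaussDensity t) := by
  unfold gaussDensity; fun_prop

lemma gaussDensity_pos {t : ℝ} (ht : 0 < t) (y : ℝ) : 0 < gaussDensity t y := by
  unfold gaussDensity; positivity

lemma hasDerivAt_gaussDensity {t : ℝ} (ht : t ≠ 0) (y : ℝ) :
    HasDerivAt (gaussDensity t) (-(y / t) * gaussDensity t y) y := by
  have hexponent : HasDerivAt (fun y : ℝ => -(y ^ 2) / (2 * t)) (-(y / t)) y := by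
    refine (((hasDerivAt_pow 2 y).neg).div_const (2 * t)).congr_deriv ?_
    field_simp
    ring
  refine (hexponent.exp.div_const (√(2 * π * t))).congr_deriv ?_
  simp only [gaussDensity]
  ring

lemma gaussDensity_eq_div_sqrt {t : ℝ} (ht : 0 < t) (y : ℝ) :
    gaussDensity t y = gaussDensity 1 (y / √t) / √t := by
  have hexponent : -((y / √t) ^ 2) / (2 * 1) = -(y ^ 2) / (2 * t) := by
    rw [div_pow, Real.sq_sqrt ht.le]; ring
  unfold gaussDensity
  rw [hexponent, mul_one, Real.sqrt_mul (by positivity) t, div_div]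

lemma integrable_gaussDensity {t : ℝ} (ht : 0 < t) : Integrable (gaussDensity t) := by
  have h := (integrable_exp_neg_mul_sq (inv_pos.2 (mul_pos two_pos ht))).div_const
    (√(2 * π * t))
  refine h.congr (Eventually.of_forall fun y => ?_)
  simp only [gaussDensity]
  congr 2
  ring

lemma integrable_mul_gaussDensity {t : ℝ} (ht : 0 < t) :
    Integrable (fun y => y * gaussDensity t y) := by
  have h := (integrable_mul_exp_neg_mul_sq (inv_pos.2 (mul_pos two_pos ht))).div_const
    (√(2 * π * t))
  refine h.congr (Eventually.of_forall fun y => ?_)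
  simp only [gaussDensity]
  rw [mul_div_assoc]
  congr 3
  ring

lemma integrable_max_sub_mul_gaussDensity {t : ℝ} (ht : 0 < t) (x : ℝ) :
    Integrable (fun y => max (y - x) 0 * gaussDensity t y) := by
  have h := ((integrable_mul_gaussDensity ht).sub
    ((integrable_gaussDensity ht).const_mul x)).pos_part
  refine h.congr (Eventually.of_forall fun y => ?_)
  simp only [Pi.sub_apply, ← sub_mul, max_mul_of_nonneg _ _ (gaussDensity_pos ht y).le, zero_mul]

lemma setIntegral_Ioi_mul_gaussDensity {t : ℝ} (ht : 0 < t) (x : ℝ) :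
    ∫ y in Ioi x, y * gaussDensity t y = t * gaussDensity t x := by
  have hderiv : ∀ y, HasDerivAt (fun y => -t * gaussDensity t y) (y * gaussDensity t y) y :=
    fun y => by
      refine ((hasDerivAt_gaussDensity ht.ne' y).const_mul (-t)).congr_deriv ?_
      field_simp
  have hlim : Tendsto (fun y => -t * gaussDensity t y) atTop (nhds 0) :=
    tendsto_zero_of_hasDerivAt_of_integrableOn_Ioi (a := 0) (fun y _ => hderiv y)
      (integrable_mul_gaussDensity ht).integrableOn
      ((integrable_gaussDensity ht).const_mul _).integrableOn
  rw [integral_Ioi_of_hasDerivAt_of_tendsto' (fun y _ => hderiv y)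
    (integrable_mul_gaussDensity ht).integrableOn hlim]
  ring

lemma setIntegral_Ioi_gaussDensity {t : ℝ} (ht : 0 < t) (x : ℝ) :
    ∫ y in Ioi x, gaussDensity t y = ∫ u in Ioi (x / √t), gaussDensity 1 u := by
  have hst : 0 < √t := Real.sqrt_pos.2 ht
  simp_rw [gaussDensity_eq_div_sqrt ht, div_eq_inv_mul _ √t]
  rw [integral_const_mul, integral_comp_mul_left_Ioi _ _ (inv_pos.2 hst), smul_eq_mul,
    inv_inv, inv_mul_cancel_left₀ hst.ne']

lemma hasDerivAt_setIntegral_Ioi {E : Type*} [NormedAddCommGroup E] [NormedSpace ℝ E]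
    [CompleteSpace E] {f : ℝ → E} (hf : Continuous f) (hfi : Integrable f) (z : ℝ) :
    HasDerivAt (fun z => ∫ u in Ioi z, f u) (-f z) z := by
  have hsplit : (fun w => ∫ u in Ioi w, f u) =
      fun w => (∫ u in Ioi (0 : ℝ), f u) - ∫ u in (0 : ℝ)..w, f u :=
    funext fun w => eq_sub_of_add_eq'
      (intervalIntegral.integral_interval_add_Ioi (a := 0) (b := w) hfi.integrableOn
        hfi.integrableOn)
  rw [hsplit]
  exact ((hasDerivAt_const z _).sub (intervalIntegral.integral_hasDerivAt_right
    hfi.intervalIntegrable hf.aestronglyMeasurable.stronglyMeasurableAtFilter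
    hf.continuousAt)).congr_deriv (zero_sub _)

noncomputable def gaussCall (t x : ℝ) : ℝ := ∫ y, max (y - x) 0 * gaussDensity t y

lemma gaussCall_eq {t : ℝ} (ht : 0 < t) (x : ℝ) :
    gaussCall t x = √t * gaussDensity 1 (x / √t) - x * ∫ u in Ioi (x / √t), gaussDensity 1 u := by
  have hIoi : gaussCall t x = ∫ y in Ioi x, (y * gaussDensity t y - x * gaussDensity t y) := by
    rw [gaussCall, ← setIntegral_eq_integral_of_forall_compl_eq_zero (s := Ioi x) fun y hy => by
      rw [max_eq_right (sub_nonpos.2 (not_lt.1 hy)), zero_mul]]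
    refine setIntegral_congr_fun measurableSet_Ioi fun y hy => ?_
    rw [max_eq_left (sub_nonneg.2 hy.le), sub_mul]
  rw [hIoi, integral_sub (integrable_mul_gaussDensity ht).integrableOn
    ((integrable_gaussDensity ht).const_mul x).integrableOn, integral_const_mul,
    setIntegral_Ioi_mul_gaussDensity ht, setIntegral_Ioi_gaussDensity ht,
    gaussDensity_eq_div_sqrt ht, ← mul_div_assoc, mul_div_right_comm, Real.div_sqrt]

lemma hasDerivAt_gaussCall {t : ℝ} (ht : 0 < t) (x : ℝ) :
    HasDerivAt (fun s => gaussCall s x) (gaussDensity t x / 2) t := by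
  have hst : 0 < √t := Real.sqrt_pos.2 ht
  have hsqrt : HasDerivAt Real.sqrt (1 / (2 * √t)) t := Real.hasDerivAt_sqrt ht.ne'
  have hz : HasDerivAt (fun s => x / √s) (-(x / √t) / (2 * t)) t := by
    refine ((hsqrt.inv hst.ne').const_mul x).congr_deriv ?_
    field_simp
    rw [Real.sq_sqrt ht.le]
  have hdensity := (hasDerivAt_gaussDensity one_ne_zero (x / √t)).comp t hz
  have htail := (hasDerivAt_setIntegral_Ioi (continuous_gaussDensity 1)
    (integrable_gaussDensity one_pos) (x / √t)).comp t hz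
  have hclosed := (hsqrt.mul hdensity).sub (htail.const_mul x)
  refine (hclosed.congr_of_eventuallyEq ?_).congr_deriv ?_
  · filter_upwards [Ioi_mem_nhds ht] with s hs using gaussCall_eq hs x
  -- the contributions `x² φ(x/√t) / (2t√t)` of `φ'` and of `Φ̄' = -φ` cancel
  · rw [gaussDensity_eq_div_sqrt ht]
    simp only [Function.comp_apply]
    field_simp
    ring

lemma integral_max_sub_mul_fakeDensity {c K s : ℝ} (hK : K ≠ 0) (hs : 0 < s) (x : ℝ) :
    ∫ y, max (y - x) 0 * fakeDensity c K s y =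
      1 / (1 - c) * (gaussCall s x - c * gaussCall (K ^ 2 * s) x) := by
  have hKs : 0 < K ^ 2 * s := by positivity
  have hsplit : ∀ y, max (y - x) 0 * fakeDensity c K s y = 1 / (1 - c) *
      (max (y - x) 0 * gaussDensity s y - c * (max (y - x) 0 * gaussDensity (K ^ 2 * s) y)) :=
    fun y => by unfold fakeDensity; ring
  simp_rw [hsplit]
  rw [integral_const_mul, integral_sub (integrable_max_sub_mul_gaussDensity hs x)
    ((integrable_max_sub_mul_gaussDensity hKs x).const_mul c), integral_const_mul]
  rfl

lemma hasDerivAt_integral_max_sub_mul_fakeDensity {c K t : ℝ} (hK : K ≠ 0) (ht : 0 < t)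
    (x : ℝ) :
    HasDerivAt (fun s => ∫ y, max (y - x) 0 * fakeDensity c K s y)
      (1 / (2 * (1 - c)) * (gaussDensity t x - c * K ^ 2 * gaussDensity (K ^ 2 * t) x)) t := by
  have hscaled : HasDerivAt (fun s => gaussCall (K ^ 2 * s) x)
      (gaussDensity (K ^ 2 * t) x / 2 * K ^ 2) t :=
    (hasDerivAt_gaussCall (by positivity) x).comp t (hasDerivAt_const_mul (K ^ 2))
  have hcombined := ((hasDerivAt_gaussCall ht x).sub (hscaled.const_mul c)).const_mul (1 / (1 - c))
  refine (hcombined.congr_of_eventuallyEq ?_).congr_deriv ?_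
  · filter_upwards [Ioi_mem_nhds ht] with s hs using integral_max_sub_mul_fakeDensity hK hs x
  · rw [mul_comm 2, ← div_div]
    ring

lemma mul_gaussDensity_sq_mul_le {a t : ℝ} (ha : 0 < a) (ha1 : a ≤ 1) (ht : 0 < t) (x : ℝ) :
    a * gaussDensity (a ^ 2 * t) x ≤ gaussDensity t x := by
  have hsqrt : √(2 * π * (a ^ 2 * t)) = a * √(2 * π * t) := by
    rw [show 2 * π * (a ^ 2 * t) = a ^ 2 * (2 * π * t) by ring, Real.sqrt_mul (sq_nonneg a),
      Real.sqrt_sq ha.le]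
  have hexp : rexp (-(x ^ 2) / (2 * (a ^ 2 * t))) ≤ rexp (-(x ^ 2) / (2 * t)) := by
    rw [exp_le_exp, neg_div, neg_div, neg_le_neg_iff]
    gcongr
    exact mul_le_of_le_one_left ht.le (pow_le_one₀ ha.le ha1)
  unfold gaussDensity
  rw [hsqrt, mul_div_assoc', mul_div_mul_left _ _ ha.ne']
  gcongr

lemma gaussDensity_sub_mul_gaussDensity_sq_mul_pos {c K t : ℝ} (hK : 0 < K) (hK1 : K ≤ 1)
    (hcK : c * K < 1) (ht : 0 < t) (x : ℝ) :
    0 < gaussDensity t x - c * K ^ 2 * gaussDensity (K ^ 2 * t) x := by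
  have hpos : 0 < K * gaussDensity (K ^ 2 * t) x := mul_pos hK (gaussDensity_pos (by positivity) x)
  refine sub_pos.2 (calc
    c * K ^ 2 * gaussDensity (K ^ 2 * t) x = (c * K) * (K * gaussDensity (K ^ 2 * t) x) := by ring
    _ < K * gaussDensity (K ^ 2 * t) x := mul_lt_of_lt_one_left hpos hcK
    _ ≤ gaussDensity t x := mul_gaussDensity_sq_mul_le hK hK1 ht x)

/-- The call function `t ↦ E[(H̃_t − x)⁺]` of the density `h_t` is differentiable in `t`
with positive derivative `(1/(2(1−c)))(f_t(x) − cK² f_{K²t}(x))`; in particular the family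
`(h_t)_{t>0}` is increasing in convex order (its call functions are nondecreasing in `t`). -/
theorem fakeDensity_call_hasDerivAt {c K : ℝ} (hc : 0 < c) (hcK : c < K) (hK : K < 1) :
    (∀ x : ℝ, ∀ t > (0 : ℝ),
      HasDerivAt (fun s => ∫ y : ℝ, max (y - x) 0 * fakeDensity c K s y)
        ((1 / (2 * (1 - c))) * (gaussDensity t x - c * K ^ 2 * gaussDensity (K ^ 2 * t) x)) t ∧
      0 < (1 / (2 * (1 - c))) * (gaussDensity t x - c * K ^ 2 * gaussDensity (K ^ 2 * t) x)) ∧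
    ∀ x : ℝ, MonotoneOn (fun s => ∫ y : ℝ, max (y - x) 0 * fakeDensity c K s y)
      (Set.Ioi 0) := by
  have hK0 : 0 < K := hc.trans hcK
  have hderiv : ∀ x, ∀ t > (0 : ℝ), HasDerivAt (fun s => ∫ y, max (y - x) 0 * fakeDensity c K s y)
      (1 / (2 * (1 - c)) * (gaussDensity t x - c * K ^ 2 * gaussDensity (K ^ 2 * t) x)) t :=
    fun x t ht => hasDerivAt_integral_max_sub_mul_fakeDensity hK0.ne' ht x
  have hpos : ∀ x, ∀ t > (0 : ℝ),
      0 < 1 / (2 * (1 - c)) * (gaussDensity t x - c * K ^ 2 * gaussDensity (K ^ 2 * t) x) :=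
    fun x t ht => mul_pos (one_div_pos.2 (by linarith))
      (gaussDensity_sub_mul_gaussDensity_sq_mul_pos hK0 hK.le (by nlinarith) ht x)
  refine ⟨fun x t ht => ⟨hderiv x t ht, hpos x t ht⟩, fun x => ?_⟩
  exact monotoneOn_of_hasDerivWithinAt_nonneg (convex_Ioi 0)
    (fun t ht => (hderiv x t ht).continuousAt.continuousWithinAt)
    (fun t ht => (hderiv x t (interior_subset ht)).hasDerivWithinAt)
    (fun t ht => (hpos x t (interior_subset ht)).le)
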